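/- (Well-definedness in Amiot's construction) Let k be a field, T a k-linear triangulated category, N ⊆ T a thick triangulated subcategory, d an integer, and β a bilinear form of degree −d on N with pretrace forms t_N. Let X be an object of T. Suppose given two triangles N →a X' →s X →b ΣN and N' →a' X'' →s' X →b' ΣN' in T with N, N' in N, and morphisms f : X' → Σ^{d−1}X, f' : X'' → Σ^{d−1}X, such that the fractions f ∘ s^{−1} and f' ∘ (s')^{−1} represent the same morphism in the Verdier quotient T/N (equivalently, there are an object X''' and morphisms u : X''' → X', u' : X''' → X'' with s∘u = s'∘u', with the cone of this common composite X''' → X lying in N, and with f∘u = f'∘u'). Then t_N((Σ^{d−1} b) ∘ f ∘ a) = t_{N'}((Σ^{d−1} b') ∘ f' ∘ a'). -/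

import Mathlib

open CategoryTheory CategoryTheory.Limits Pretriangulated

namespace CategoryTheory.Triangulated

/-- The triangulated subcategory structure of Mathlib (December 2024), removed since. -/
structure Subcategory (C : Type*) [Category C] [HasZeroObject C] [HasShift C ℤ]
    [Preadditive C] [∀ (n : ℤ), (shiftFunctor C n).Additive] [Pretriangulated C] where
  P : C → Prop
  zero' : ∃ (Z : C) (_ : IsZero Z), P Z
  shift (X : C) (n : ℤ) : P X → P (X⟦n⟧)
  ext₂' (T : Triangle C) (_ : T ∈ distTriang C) : P T.obj₁ → P T.obj₃ →
    ∃ (Y : C) (_ : T.obj₂ ≅ Y), P Y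

end CategoryTheory.Triangulated


theorem amiot_key
    (k : Type*) [Field k]
    (T : Type*) [Category T] [Preadditive T] [CategoryTheory.Linear k T] [HasZeroObject T]
    [HasShift T ℤ] [∀ n : ℤ, (shiftFunctor T n).Additive]
    [Pretriangulated T]
    (N : Triangulated.Subcategory T)
    (d : ℤ)
    (β : ∀ X Y : T, N.P X → N.P Y → ((X ⟶ Y) →ₗ[k] (Y ⟶ X⟦d⟧) →ₗ[k] k))
    (hβ₁ : ∀ (X0 X1 X2 : T) (h0 : N.P X0) (h1 : N.P X1) (h2 : N.P X2)
      (u : X0 ⟶ X1) (f : X1 ⟶ X2) (g : X2 ⟶ X0⟦d⟧),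
      β X0 X2 h0 h2 (u ≫ f) g = β X1 X2 h1 h2 f (g ≫ u⟦d⟧'))
    (hβ₂ : ∀ (X1 X2 X3 : T) (h1 : N.P X1) (h2 : N.P X2) (h3 : N.P X3)
      (f : X1 ⟶ X2) (v : X2 ⟶ X3) (g : X3 ⟶ X1⟦d⟧),
      β X1 X3 h1 h3 (f ≫ v) g = β X1 X2 h1 h2 f (v ≫ g))
    (X NN X' NN'' X''' : T) (hNN : N.P NN) (hNN'' : N.P NN'')
    (a : NN ⟶ X') (s : X' ⟶ X) (b : X ⟶ NN⟦(1 : ℤ)⟧)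
    (ha : Triangle.mk a s b ∈ (distTriang T))
    (a'' : NN'' ⟶ X''') (s'' : X''' ⟶ X) (b'' : X ⟶ NN''⟦(1 : ℤ)⟧)
    (ha'' : Triangle.mk a'' s'' b'' ∈ (distTriang T))
    (u : X''' ⟶ X') (hus : u ≫ s = s'')
    (f : X' ⟶ X⟦(d - 1 : ℤ)⟧)
    (hd : (1 : ℤ) + (d - 1) = d) :
    β NN NN hNN hNN (𝟙 NN)
        (a ≫ f ≫ b⟦(d - 1 : ℤ)⟧' ≫ (shiftFunctorAdd' T 1 (d - 1) d hd).inv.app NN)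
      = β NN'' NN'' hNN'' hNN'' (𝟙 NN'')
        (a'' ≫ (u ≫ f) ≫ b''⟦(d - 1 : ℤ)⟧' ≫
          (shiftFunctorAdd' T 1 (d - 1) d hd).inv.app NN'') := by
  obtain ⟨φ, hφ1, hφ2⟩ : ∃ φ : NN'' ⟶ NN, a'' ≫ u = φ ≫ a ∧ b'' ≫ φ⟦(1 : ℤ)⟧' = 𝟙 X ≫ b :=
    complete_distinguished_triangle_morphism₁
    (Triangle.mk a'' s'' b'') (Triangle.mk a s b) ha'' ha u (𝟙 X)
    (by change s'' ≫ 𝟙 X = u ≫ s; rw [Category.comp_id, hus])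
  change a'' ≫ u = φ ≫ a at hφ1
  change b'' ≫ φ⟦(1 : ℤ)⟧' = 𝟙 X ≫ b at hφ2
  rw [Category.id_comp] at hφ2
  have hb : b = b'' ≫ φ⟦(1 : ℤ)⟧' := hφ2.symm
  set ε := (shiftFunctorAdd' T 1 (d - 1) d hd).inv with hε
  have hnat : (φ⟦(1 : ℤ)⟧')⟦(d - 1 : ℤ)⟧' ≫ ε.app NN = ε.app NN'' ≫ φ⟦d⟧' :=
    ε.naturality φ
  set h' : NN ⟶ NN''⟦d⟧ := a ≫ f ≫ b''⟦(d - 1 : ℤ)⟧' ≫ ε.app NN'' with hh'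
  have e1 : a ≫ f ≫ b⟦(d - 1 : ℤ)⟧' ≫ ε.app NN = h' ≫ φ⟦d⟧' := by
    rw [hh', hb]
    simp only [Functor.map_comp, Category.assoc]
    rw [hnat]
  have e2 : φ ≫ h' = a'' ≫ (u ≫ f) ≫ b''⟦(d - 1 : ℤ)⟧' ≫ ε.app NN'' := by
    rw [hh', ← Category.assoc, ← hφ1]
    simp only [Category.assoc]
  rw [e1]
  rw [← hβ₁ NN'' NN NN hNN'' hNN hNN φ (𝟙 NN) h', Category.comp_id]
  rw [show (φ : NN'' ⟶ NN) = 𝟙 NN'' ≫ φ by rw [Category.id_comp]]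
  rw [hβ₂ NN'' NN'' NN hNN'' hNN'' hNN (𝟙 NN'') φ h', e2]

/-- **Well-definedness in Amiot's construction.**
Let `k` be a field, `T` a `k`-linear triangulated category, `N ⊆ T` a thick triangulated
subcategory, `d` an integer and `β` a bilinear form of degree `-d` on `N` with pretrace forms
`t_X = β X X _ _ (𝟙 X)`.  Given two distinguished triangles `NN →a X' →s X →b NN⟦1⟧` and
`NN' →a' X'' →s' X →b' NN'⟦1⟧` with `NN`, `NN'` in `N`, and morphisms `f : X' ⟶ X⟦d-1⟧`,
`f' : X'' ⟶ X⟦d-1⟧` such that the fractions `f ∘ s⁻¹` and `f' ∘ s'⁻¹` agree in the Verdier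
quotient `T/N` — witnessed by an object `X'''` and morphisms `u : X''' ⟶ X'`, `u' : X''' ⟶ X''`
with `u ≫ s = u' ≫ s'`, the cone of this common composite `X''' ⟶ X` lying in `N`, and
`u ≫ f = u' ≫ f'` — one has
`t_NN((Σ^{d-1} b) ∘ f ∘ a) = t_NN'((Σ^{d-1} b') ∘ f' ∘ a')`. -/
theorem amiot_pretrace_well_defined
    (k : Type*) [Field k]
    (T : Type*) [Category T] [Preadditive T] [CategoryTheory.Linear k T] [HasZeroObject T]
    [HasShift T ℤ] [∀ n : ℤ, (shiftFunctor T n).Additive]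
    [∀ n : ℤ, Functor.Linear k (shiftFunctor T n)]
    [Pretriangulated T] [IsTriangulated T]
    (N : Triangulated.Subcategory T)
    -- `N` is thick, i.e. closed under retracts (direct summands):
    (thick : ∀ (X Z : T) (r : Z ⟶ X) (s : X ⟶ Z), s ≫ r = 𝟙 X → N.P Z → N.P X)
    (d : ℤ)
    -- a bilinear form `β` of degree `-d` on `N`:
    (β : ∀ X Y : T, N.P X → N.P Y → ((X ⟶ Y) →ₗ[k] (Y ⟶ X⟦d⟧) →ₗ[k] k))
    (hβ₁ : ∀ (X0 X1 X2 : T) (h0 : N.P X0) (h1 : N.P X1) (h2 : N.P X2)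
      (u : X0 ⟶ X1) (f : X1 ⟶ X2) (g : X2 ⟶ X0⟦d⟧),
      β X0 X2 h0 h2 (u ≫ f) g = β X1 X2 h1 h2 f (g ≫ u⟦d⟧'))
    (hβ₂ : ∀ (X1 X2 X3 : T) (h1 : N.P X1) (h2 : N.P X2) (h3 : N.P X3)
      (f : X1 ⟶ X2) (v : X2 ⟶ X3) (g : X3 ⟶ X1⟦d⟧),
      β X1 X3 h1 h3 (f ≫ v) g = β X1 X2 h1 h2 f (v ≫ g))
    -- the two triangles with cones `NN`, `NN'` in `N` and the morphisms `f`, `f'`: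
    (X NN X' NN' X'' : T) (hNN : N.P NN) (hNN' : N.P NN')
    (a : NN ⟶ X') (s : X' ⟶ X) (b : X ⟶ NN⟦(1 : ℤ)⟧)
    (ha : Triangle.mk a s b ∈ (distTriang T))
    (a' : NN' ⟶ X'') (s' : X'' ⟶ X) (b' : X ⟶ NN'⟦(1 : ℤ)⟧)
    (ha' : Triangle.mk a' s' b' ∈ (distTriang T))
    (f : X' ⟶ X⟦(d - 1 : ℤ)⟧) (f' : X'' ⟶ X⟦(d - 1 : ℤ)⟧)
    -- the fractions `f ∘ s⁻¹` and `f' ∘ s'⁻¹` represent the same morphism in `T/N`: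
    (X''' : T) (u : X''' ⟶ X') (u' : X''' ⟶ X'')
    (hs : u ≫ s = u' ≫ s')
    -- the cone of the common composite `X''' ⟶ X` lies in `N`:
    (hcone : ∃ (M : T) (v : X ⟶ M) (w : M ⟶ X'''⟦(1 : ℤ)⟧),
      Triangle.mk (u ≫ s) v w ∈ (distTriang T) ∧ N.P M)
    (hf : u ≫ f = u' ≫ f') :
    β NN NN hNN hNN (𝟙 NN)
        (a ≫ f ≫ b⟦(d - 1 : ℤ)⟧' ≫ (shiftFunctorAdd' T 1 (d - 1) d (by omega)).inv.app NN)
      = β NN' NN' hNN' hNN' (𝟙 NN')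
        (a' ≫ f' ≫ b'⟦(d - 1 : ℤ)⟧' ≫
          (shiftFunctorAdd' T 1 (d - 1) d (by omega)).inv.app NN') := by
  obtain ⟨M, v, w, hT, hM⟩ := hcone
  have hM' : N.P (M⟦(-1 : ℤ)⟧) := N.shift M (-1) hM
  have ha'' := inv_rot_of_distTriang _ hT
  have h1 := amiot_key k T N d β hβ₁ hβ₂ X NN X' (M⟦(-1 : ℤ)⟧) (X''') hNN hM'
    a s b ha (Triangle.mk (u ≫ s) v w).invRotate.mor₁ (u ≫ s)
    (v ≫ (shiftEquiv T (1 : ℤ)).counitIso.inv.app M) ha'' u rfl f (by omega)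
  have h2 := amiot_key k T N d β hβ₁ hβ₂ X NN' (X'') (M⟦(-1 : ℤ)⟧) (X''') hNN' hM'
    a' s' b' ha' (Triangle.mk (u ≫ s) v w).invRotate.mor₁ (u ≫ s)
    (v ≫ (shiftEquiv T (1 : ℤ)).counitIso.inv.app M) ha'' u' hs.symm f' (by omega)
  rw [h1, h2, hf]
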